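/- Let Σ = {a^(1), e^(0)} and Δ = {d^(2), e^(0)}. Let M be the deterministic top-down tree transducer with the single state q0 and rules q0(a(x1)) → d(q0(x1), q0(x1)) and q0(e) → e, and let N be the deterministic top-down tree transducer with states p0 (initial) and p and rules p0(a(x1)) → p(x1), p0(e) → e, p(a(x1)) → d(p(x1), p(x1)), p(e) → d(e, e). Then M and N are equivalent and have height-balance bounded by 1, but they do not have bounded size-balance. -/

import Mathlib

/-! ## Finite ordered ranked trees -/

/-- Finite ordered labeled trees. -/
inductive RTree (α : Type) : Type
  | node : α → List (RTree α) → RTree α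

namespace RTree

variable {α β : Type}

/-- The label of the root node. -/
def label : RTree α → α
  | node a _ => a

mutual
  /-- The size (number of nodes) of a tree. -/
  def size : RTree α → ℕ
    | node _ ts => 1 + sizeList ts
  def sizeList : List (RTree α) → ℕ
    | [] => 0
    | t :: ts => size t + sizeList ts
end

mutual
  /-- The height of a tree (a leaf has height 1). -/
  def height : RTree α → ℕ
    | node _ ts => 1 + heightList ts
  def heightList : List (RTree α) → ℕ
    | [] => 0
    | t :: ts => max (height t) (heightList ts)
end

mutual
  /-- Relabeling of a tree. -/
  def map (f : α → β) : RTree α → RTree β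
    | node a ts => node (f a) (mapList f ts)
  def mapList (f : α → β) : List (RTree α) → List (RTree β)
    | [] => []
    | t :: ts => map f t :: mapList f ts
end

/-- `WF rk t` means `t` is a tree over the ranked alphabet with rank function `rk`:
every node labeled `a` has exactly `rk a` children.  Thus `T_Σ = {t | WF rk t}`. -/
inductive WF (rk : α → ℕ) : RTree α → Prop
  | node {a : α} {ts : List (RTree α)} :
      ts.length = rk a → (∀ t ∈ ts, WF rk t) → WF rk (node a ts)

/-- `SubtreeAt t u r`: `u` is (the Dewey path of) a node of `t` and `r` is the
subtree of `t` rooted at `u`. -/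
inductive SubtreeAt : RTree α → List ℕ → RTree α → Prop
  | here (t : RTree α) : SubtreeAt t [] t
  | child {a : α} {ts : List (RTree α)} {i : ℕ} {u : List ℕ} {ti r : RTree α} :
      ts[i]? = some ti → SubtreeAt ti u r → SubtreeAt (node a ts) (i :: u) r

/-- `ReplaceAt t u r t'`: `u` is a node of `t`, and `t'` is the tree `t[u ← r]`
obtained from `t` by replacing the subtree rooted at `u` by `r`. -/
inductive ReplaceAt : RTree α → List ℕ → RTree α → RTree α → Prop
  | here (t r : RTree α) : ReplaceAt t [] r r
  | child {a : α} {ts : List (RTree α)} {i : ℕ} {u : List ℕ} {r ti ti' : RTree α} :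
      ts[i]? = some ti → ReplaceAt ti u r ti' →
      ReplaceAt (node a ts) (i :: u) r (node a (ts.set i ti'))

end RTree

/-- A (complete) deterministic finite-state bottom-up tree automaton over the
alphabet `S`, with state set `P` and final states `final`. -/
structure BUA (S P : Type) where
  delta : S → List P → P
  final : Set P

variable {S P : Type}

mutual
  /-- The state reached by a bottom-up automaton on a tree. -/
  def buaRun (A : BUA S P) : RTree S → P
    | .node a ts => A.delta a (buaRunList A ts)
  def buaRunList (A : BUA S P) : List (RTree S) → List P
    | [] => []
    | t :: ts => buaRun A t :: buaRunList A ts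
end

/-- A tree language over the ranked alphabet `(S, rk)` is regular if it is recognized
by a deterministic finite-state bottom-up tree automaton. -/
def RegularTreeLang (rk : S → ℕ) (L : Set (RTree S)) : Prop :=
  ∃ (P : Type) (_ : Fintype P) (A : BUA S P),
    L = {t | RTree.WF rk t ∧ buaRun A t ∈ A.final}
/-! ## Deterministic macro tree transducers

A state of rank `m+1` is encoded by `prm q = m` (its number of context parameters).
Right-hand sides of rules are trees over `Δ ∪ Q ∪ X ∪ Y`, where every `Q`-labeled
node has an input variable `x_i` as its (implicit) first child; this is encoded by
the constructor `MRhs.call q i ps`.  A top-down tree transducer is exactly a macro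
tree transducer all of whose states have rank one (`prm q = 0`).

To be able to talk about partial inputs `s[u ← x]`, input trees are trees over
`Option S`, where `none` plays the role of the fresh rank-0 symbol `x`; an
ordinary input tree `s` is represented as `RTree.map some s`.  Outputs (sentential
forms) are trees over the alphabet `PL Q D`: output symbols `PL.out d`, unresolved
state calls `PL.st q` (i.e. `q(x, t₁, …, t_m)`, whose children are the current
parameter trees), and formal context parameters `PL.pr j` (i.e. `y_{j+1}`). -/

/-- Labels of sentential forms produced by a macro tree transducer. -/
inductive PL (Q D : Type) : Type
  | out : D → PL Q D
  | st : Q → PL Q D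
  | pr : ℕ → PL Q D

/-- Right-hand sides of rules of a macro tree transducer with states `Q` and output
alphabet `D`: `out d ts` is an output symbol with subtrees, `param j` is the context
parameter `y_{j+1}`, and `call q i ps` is a state call `q(x_{i+1}, ps)`. -/
inductive MRhs (Q D : Type) : Type
  | out : D → List (MRhs Q D) → MRhs Q D
  | param : ℕ → MRhs Q D
  | call : Q → ℕ → List (MRhs Q D) → MRhs Q D

/-- Well-formedness of a right-hand side for a rule of a state with `m` parameters
and an input symbol of rank `k`: output symbols have the right number of children,
parameters are among `y_1, …, y_m`, input variables are among `x_1, …, x_k`, and a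
call of state `q'` passes exactly `prm q'` parameter trees. -/
inductive RhsWF {Q D : Type} (rkD : D → ℕ) (prm : Q → ℕ) (k m : ℕ) : MRhs Q D → Prop
  | out {d ts} : ts.length = rkD d → (∀ t ∈ ts, RhsWF rkD prm k m t) →
      RhsWF rkD prm k m (.out d ts)
  | param {j} : j < m → RhsWF rkD prm k m (.param j)
  | call {q i ps} : i < k → ps.length = prm q → (∀ t ∈ ps, RhsWF rkD prm k m t) →
      RhsWF rkD prm k m (.call q i ps)

/-- A deterministic macro tree transducer with states `Q`, input alphabet `(S, rkS)`
and output alphabet `(D, rkD)`.  `prm q` is the number of context parameters of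
state `q` (so `q` has rank `prm q + 1`); `rules q σ` is the right-hand side of the
`(q,σ)`-rule, if present (determinism: at most one rule per pair). -/
structure MTT (Q S D : Type) where
  rkS : S → ℕ
  rkD : D → ℕ
  prm : Q → ℕ
  init : Q
  rules : Q → S → Option (MRhs Q D)

namespace MTT

variable {Q S D : Type}

/-- `M` is a well-formed macro tree transducer: the initial state has rank one and
all right-hand sides are well-formed. -/
def Proper (M : MTT Q S D) : Prop :=
  M.prm M.init = 0 ∧
    ∀ q σ r, M.rules q σ = some r → RhsWF M.rkD M.prm (M.rkS σ) (M.prm q) r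

/-- `M` is total: there is exactly one rule for every state and input symbol. -/
def Total (M : MTT Q S D) : Prop := ∀ q σ, (M.rules q σ).isSome

end MTT

/-- A top-down tree transducer is a macro tree transducer each of whose states has
rank one, i.e. no context parameters. -/
def IsTopDown {Q S D : Type} (M : MTT Q S D) : Prop := ∀ q, M.prm q = 0

/-- A macro tree transducer is monadic if its input and output ranked alphabets
only contain symbols of rank 1 and rank 0. -/
def MTT.Monadic {Q S D : Type} (M : MTT Q S D) : Prop :=
  (∀ σ, M.rkS σ ≤ 1) ∧ (∀ d, M.rkD d ≤ 1)

variable {Q S D : Type}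

mutual
  /-- Second-order substitution of the parameter leaves `y_{j+1}` of a sentential
  form by the trees `vs`. -/
  def psubst (vs : List (RTree (PL Q D))) : RTree (PL Q D) → RTree (PL Q D)
    | .node (.pr j) _ => vs.getD j (.node (.pr j) [])
    | .node (.out d) ts => .node (.out d) (psubstList vs ts)
    | .node (.st q) ts => .node (.st q) (psubstList vs ts)
  def psubstList (vs : List (RTree (PL Q D))) :
      List (RTree (PL Q D)) → List (RTree (PL Q D))
    | [] => []
    | t :: ts => psubst vs t :: psubstList vs ts
end

/-- The fresh rank-0 input symbol `x` used in partial inputs `s[u ← x]`. -/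
def xLeaf {S : Type} : RTree (Option S) := .node none []

mutual
  /-- Big-step semantics of a macro tree transducer: `MEval M q s t` means that the
  computation of `M` started in state `q` on the input tree `s` (a tree over
  `Option S`, where `none` is the fresh symbol `x` of partial inputs) produces the
  (sentential form) tree `t`.  On the symbol `x` the computation blocks, yielding
  the unresolved call `q(x, y_1, …, y_m)`.  For `s ∈ T_Σ` (no occurrence of `x`)
  and well-formed transducers, `t` contains no `PL.st` labels, and `M_q(s)` is
  defined iff such a `t` exists; determinism makes `t` unique. -/
  inductive MEval (M : MTT Q S D) : Q → RTree (Option S) → RTree (PL Q D) → Prop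
    | atX (q : Q) :
        MEval M q (.node none [])
          (.node (.st q) ((List.range (M.prm q)).map fun j => .node (.pr j) []))
    | step {q : Q} {σ : S} {ss : List (RTree (Option S))} {r : MRhs Q D}
        {t : RTree (PL Q D)} :
        M.rules q σ = some r → MExpand M ss r t → MEval M q (.node (some σ) ss) t

  /-- Evaluation of a right-hand side with current input subtrees `ss`. -/
  inductive MExpand (M : MTT Q S D) :
      List (RTree (Option S)) → MRhs Q D → RTree (PL Q D) → Prop
    | out {ss d ts us} : MExpandList M ss ts us →
        MExpand M ss (.out d ts) (.node (.out d) us)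
    | param {ss j} : MExpand M ss (.param j) (.node (.pr j) [])
    | call {ss : List (RTree (Option S))} {q : Q} {i : ℕ} {ps : List (MRhs Q D)}
        {si : RTree (Option S)} {vs : List (RTree (PL Q D))} {u : RTree (PL Q D)} :
        ss[i]? = some si → MExpandList M ss ps vs → MEval M q si u →
        MExpand M ss (.call q i ps) (psubst vs u)

  inductive MExpandList (M : MTT Q S D) :
      List (RTree (Option S)) → List (MRhs Q D) → List (RTree (PL Q D)) → Prop
    | nil {ss} : MExpandList M ss [] []
    | cons {ss t ts u us} : MExpand M ss t u → MExpandList M ss ts us →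
        MExpandList M ss (t :: ts) (u :: us)
end

/-- The translation `τ_M ⊆ T_Σ × T_Δ` realized by a macro tree transducer `M`
(the graph of the partial function `τ_M : T_Σ ⇀ T_Δ`). -/
def MTT.tau (M : MTT Q S D) : Set (RTree S × RTree D) :=
  {p | RTree.WF M.rkS p.1 ∧ MEval M M.init (RTree.map some p.1) (RTree.map PL.out p.2)}

/-! ## Statement 3

The concrete transducers `M` and `N` of Figure 2.  Input alphabet
`Σ = {a⁽¹⁾, e⁽⁰⁾}` encoded as `Bool` with `a = true`, `e = false`; output alphabet
`Δ = {d⁽²⁾, e⁽⁰⁾}` encoded as `Bool` with `d = true`, `e = false`. -/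

/-- Rank function of `Σ = {a⁽¹⁾, e⁽⁰⁾}`. -/
def rkSig : Bool → ℕ := fun b => cond b 1 0

/-- Rank function of `Δ = {d⁽²⁾, e⁽⁰⁾}`. -/
def rkDel : Bool → ℕ := fun b => cond b 2 0

/-- The transducer `M` with the single state `q0` and rules
`q0(a(x1)) → d(q0(x1), q0(x1))` and `q0(e) → e`. -/
def Mex : MTT Unit Bool Bool where
  rkS := rkSig
  rkD := rkDel
  prm := fun _ => 0
  init := ()
  rules := fun _ σ =>
    match σ with
    | true => some (.out true [.call () 0 [], .call () 0 []])
    | false => some (.out false [])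

/-- The transducer `N` with states `p0 = false` (initial) and `p = true` and rules
`p0(a(x1)) → p(x1)`, `p0(e) → e`, `p(a(x1)) → d(p(x1), p(x1))`, `p(e) → d(e,e)`. -/
def Nex : MTT Bool Bool Bool where
  rkS := rkSig
  rkD := rkDel
  prm := fun _ => 0
  init := false
  rules := fun q σ =>
    match q, σ with
    | false, true => some (.call true 0 [])
    | false, false => some (.out false [])
    | true, true => some (.out true [.call true 0 [], .call true 0 []])
    | true, false => some (.out true [.out false [], .out false []])

/-! On the complete input `a^n(e)` both transducers output the perfect binary tree of depth `n`
over `e`: `N` spends the first `a` in `p0` without copying and makes up for the lost level with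
`p(e) → d(e, e)`. Since evaluation is deterministic, this already gives `τ_M = τ_N`. On the partial
input `a^k(x)`, however, `M` outputs the perfect tree of depth `k` over `q0(x)` and `N` the one of
depth `k - 1` over `p(x)` (just `p0(x)` when `k = 0`): their heights differ by at most one, but for
`k ≥ 1` their sizes differ by `2^k`. -/

namespace RTree

variable {α β : Type}

def chain (a : α) (b : RTree α) : ℕ → RTree α
  | 0 => b
  | k + 1 => node a [chain a b k]

def perfect (d : α) (l : RTree α) : ℕ → RTree α
  | 0 => l
  | n + 1 => node d [perfect d l n, perfect d l n]

theorem map_chain (f : α → β) (a : α) (b : RTree α) (k : ℕ) :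
    map f (chain a b k) = chain (f a) (map f b) k := by
  induction k with
  | zero => rfl
  | succ k ih => simp [chain, map, mapList, ih]

theorem map_perfect (f : α → β) (d : α) (l : RTree α) (n : ℕ) :
    map f (perfect d l n) = perfect (f d) (map f l) n := by
  induction n with
  | zero => rfl
  | succ n ih => simp [perfect, map, mapList, ih]

theorem perfect_succ_eq_perfect_node (d : α) (l : RTree α) (n : ℕ) :
    perfect d l (n + 1) = perfect d (node d [l, l]) n := by
  induction n with
  | zero => rfl
  | succ n ih => rw [perfect, ih]; rfl

theorem height_perfect (d : α) (l : RTree α) (n : ℕ) :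
    (perfect d l n).height = n + l.height := by
  induction n with
  | zero => simp [perfect]
  | succ n ih => simp [perfect, height, heightList, ih]; omega

theorem size_perfect (d : α) (l : RTree α) (n : ℕ) :
    (perfect d l n).size + 1 = 2 ^ n * (l.size + 1) := by
  induction n with
  | zero => simp [perfect]
  | succ n ih => simp only [perfect, size, sizeList]; rw [pow_succ]; linarith

mutual
theorem map_inj {f : α → β} (hf : Function.Injective f) :
    ∀ {s t : RTree α}, map f s = map f t → s = t
  | node a ss, node b ts, h => by
    simp only [map, node.injEq] at h
    rw [hf h.1, mapList_inj hf h.2]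
theorem mapList_inj {f : α → β} (hf : Function.Injective f) :
    ∀ {ss ts : List (RTree α)}, mapList f ss = mapList f ts → ss = ts
  | [], [], _ => rfl
  | [], _ :: _, h | _ :: _, [], h => by simp [mapList] at h
  | s :: ss, t :: ts, h => by
    simp only [mapList, List.cons.injEq] at h
    rw [map_inj hf h.1, mapList_inj hf h.2]
end

theorem wf_iff_eq_chain {rk : α → ℕ} {a e : α} (ha : rk a = 1) (he : rk e = 0)
    (hrk : ∀ c, c = a ∨ c = e) {s : RTree α} :
    WF rk s ↔ ∃ n, s = chain a (node e []) n := by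
  constructor
  · intro h
    induction h with
    | @node c ts hlen _ ih =>
      rcases hrk c with rfl | rfl
      · obtain ⟨t, rfl⟩ := List.length_eq_one_iff.mp (hlen.trans ha)
        obtain ⟨n, rfl⟩ := ih t (by simp)
        exact ⟨n + 1, rfl⟩
      · rw [List.length_eq_zero_iff.mp (hlen.trans he)]
        exact ⟨0, rfl⟩
  · rintro ⟨n, rfl⟩
    induction n with
    | zero => exact .node he.symm (by simp)
    | succ n ih => exact .node ha.symm (by simpa using ih)

theorem ReplaceAt.eq_chain {a c : α} {r t : RTree α} {n : ℕ} {u : List ℕ}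
    (h : ReplaceAt (chain a (node c []) n) u r t) : ∃ k, t = chain a r k := by
  induction n generalizing u t with
  | zero =>
    cases h with
    | here => exact ⟨0, rfl⟩
    | child hti _ => simp at hti
  | succ n ih =>
    cases h with
    | here => exact ⟨0, rfl⟩
    | @child _ _ i _ _ _ _ hti hrep =>
      obtain _ | i := i
      · obtain rfl : _ = _ := Option.some.inj hti
        obtain ⟨k, rfl⟩ := ih hrep
        exact ⟨k + 1, rfl⟩
      · simp at hti

theorem replaceAt_chain (a : α) (b r : RTree α) (n : ℕ) :
    ReplaceAt (chain a b n) (List.replicate n 0) r (chain a r n) := by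
  induction n with
  | zero => exact .here _ _
  | succ n ih => exact .child (ts := [chain a b n]) rfl ih

end RTree

open RTree

section Evaluation

variable {Q S D : Type} {M : MTT Q S D}

mutual
theorem MEval.functional : ∀ {q : Q} {s : RTree (Option S)} {t t' : RTree (PL Q D)},
    MEval M q s t → MEval M q s t' → t = t'
  | _, _, _, _, .atX _, .atX _ => rfl
  | _, _, _, _, .step hr he, .step hr' he' => by
    rw [hr, Option.some.injEq] at hr'
    subst hr'
    exact MExpand.functional he he'
theorem MExpand.functional : ∀ {ss : List (RTree (Option S))} {r : MRhs Q D}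
    {t t' : RTree (PL Q D)}, MExpand M ss r t → MExpand M ss r t' → t = t'
  | _, _, _, _, .out hus, .out hus' => by rw [MExpandList.functional hus hus']
  | _, _, _, _, .param, .param => rfl
  | _, _, _, _, .call hsi hvs hev, .call hsi' hvs' hev' => by
    rw [hsi, Option.some.injEq] at hsi'
    subst hsi'
    rw [MExpandList.functional hvs hvs', MEval.functional hev hev']
theorem MExpandList.functional : ∀ {ss : List (RTree (Option S))} {rs : List (MRhs Q D)}
    {ts ts' : List (RTree (PL Q D))}, MExpandList M ss rs ts → MExpandList M ss rs ts' → ts = ts'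
  | _, _, _, _, .nil, .nil => rfl
  | _, _, _, _, .cons hu hus, .cons hu' hus' => by
    rw [MExpand.functional hu hu', MExpandList.functional hus hus']
end

theorem psubst_nil_perfect (d : D) {l : RTree (PL Q D)} (hl : psubst [] l = l) (n : ℕ) :
    psubst [] (perfect (.out d) l n) = perfect (.out d) l n := by
  induction n with
  | zero => exact hl
  | succ n ih => simp [perfect, psubst, psubstList, ih]

theorem MEval.relay {q q' : Q} {σ : S} {s : RTree (Option S)} {t : RTree (PL Q D)}
    (hr : M.rules q σ = some (.call q' 0 [])) (hs : MEval M q' s t) (ht : psubst [] t = t) :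
    MEval M q (.node (some σ) [s]) t :=
  .step hr (ht ▸ .call rfl .nil hs)

theorem MEval.copy {q q' : Q} {σ : S} {d : D} {s : RTree (Option S)} {t : RTree (PL Q D)}
    (hr : M.rules q σ = some (.out d [.call q' 0 [], .call q' 0 []]))
    (hs : MEval M q' s t) (ht : psubst [] t = t) :
    MEval M q (.node (some σ) [s]) (.node (.out d) [t, t]) :=
  have hc : MExpand M [s] (.call q' 0 []) t := ht ▸ .call rfl .nil hs
  .step hr (.out (.cons hc (.cons hc .nil)))

theorem MEval.chain_perfect {q : Q} {σ : S} {d : D} {b : RTree (Option S)} {l : RTree (PL Q D)}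
    (hr : M.rules q σ = some (.out d [.call q 0 [], .call q 0 []]))
    (hb : MEval M q b l) (hl : psubst [] l = l) (k : ℕ) :
    MEval M q (chain (some σ) b k) (perfect (.out d) l k) := by
  induction k with
  | zero => exact hb
  | succ k ih => exact ih.copy hr (psubst_nil_perfect d hl k)

theorem MTT.tau_eq_of_forall_eval {Q' : Type} {N : MTT Q' S D} (hrk : M.rkS = N.rkS)
    (h : ∀ s, WF M.rkS s → ∃ t, MEval M M.init (map some s) (map PL.out t) ∧
      MEval N N.init (map some s) (map PL.out t)) :
    M.tau = N.tau := by
  ext ⟨s, t'⟩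
  constructor
  · rintro ⟨hs, hev⟩
    obtain ⟨t, hM, hN⟩ := h s hs
    obtain rfl := map_inj (fun _ _ => PL.out.inj) (hev.functional hM)
    exact ⟨hrk ▸ hs, hN⟩
  · rintro ⟨hs, hev⟩
    obtain ⟨t, hM, hN⟩ := h s (hrk ▸ hs)
    obtain rfl := map_inj (fun _ _ => PL.out.inj) (hev.functional hN)
    exact ⟨hrk ▸ hs, hM⟩

end Evaluation

theorem wf_rkSig_iff {s : RTree Bool} : WF rkSig s ↔ ∃ n, s = chain true (.node false []) n :=
  wf_iff_eq_chain (a := true) (e := false) rfl rfl fun c => by cases c <;> simp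

theorem Mex_eval_chain {b : RTree (Option Bool)} {l : RTree (PL Unit Bool)}
    (hb : MEval Mex () b l) (hl : psubst [] l = l) (k : ℕ) :
    MEval Mex () (chain (some true) b k) (perfect (.out true) l k) :=
  hb.chain_perfect rfl hl k

theorem Nex_eval_chain_succ {b : RTree (Option Bool)} {l : RTree (PL Bool Bool)}
    (hb : MEval Nex true b l) (hl : psubst [] l = l) (k : ℕ) :
    MEval Nex false (chain (some true) b (k + 1)) (perfect (.out true) l k) :=
  .relay rfl (hb.chain_perfect rfl hl k) (psubst_nil_perfect true hl k)

theorem Mex_eval_input (n : ℕ) :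
    MEval Mex () (map some (chain true (.node false []) n))
      (map PL.out (perfect true (.node false []) n)) := by
  rw [map_chain, map_perfect]
  exact Mex_eval_chain (.step rfl (.out .nil)) rfl n

theorem Nex_eval_input (n : ℕ) :
    MEval Nex false (map some (chain true (.node false []) n))
      (map PL.out (perfect true (.node false []) n)) := by
  rw [map_chain, map_perfect]
  cases n with
  | zero => exact .step rfl (.out .nil)
  | succ n =>
    rw [perfect_succ_eq_perfect_node]
    exact Nex_eval_chain_succ (.step rfl (.out (.cons (.out .nil) (.cons (.out .nil) .nil))))
      rfl n

theorem tau_Mex_eq_tau_Nex : Mex.tau = Nex.tau :=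
  MTT.tau_eq_of_forall_eval rfl fun s hs => by
    obtain ⟨n, rfl⟩ := wf_rkSig_iff.1 hs
    exact ⟨_, Mex_eval_input n, Nex_eval_input n⟩

theorem eq_chain_of_replaceAt {s : RTree Bool} {u : List ℕ} {pt : RTree (Option Bool)}
    (hs : ∃ t, (s, t) ∈ Mex.tau) (hpt : ReplaceAt (map some s) u xLeaf pt) :
    ∃ k, pt = chain (some true) xLeaf k := by
  obtain ⟨t, hwf, -⟩ := hs
  obtain ⟨n, rfl⟩ := wf_rkSig_iff.1 hwf
  rw [map_chain] at hpt
  exact hpt.eq_chain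

theorem Mex_eval_partial (k : ℕ) :
    MEval Mex () (chain (some true) xLeaf k) (perfect (.out true) (.node (.st ()) []) k) :=
  Mex_eval_chain (.atX ()) rfl k

theorem Nex_eval_partial_zero : MEval Nex false xLeaf (.node (.st false) []) :=
  .atX false

theorem Nex_eval_partial_succ (k : ℕ) :
    MEval Nex false (chain (some true) xLeaf (k + 1)) (perfect (.out true) (.node (.st true) []) k) :=
  Nex_eval_chain_succ (.atX true) rfl k

theorem size_Mex_partial_sub_size_Nex_partial (k : ℕ) :
    ((perfect (PL.out true) (.node (PL.st ()) []) (k + 1)).size : ℤ) -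
      (perfect (PL.out true) (.node (PL.st true) []) k).size = 2 ^ (k + 1) := by
  have hM := size_perfect (PL.out true) (.node (.st ()) []) (k + 1)
  have hN := size_perfect (PL.out true) (.node (.st true) []) k
  simp only [size, sizeList] at hM hN
  zify at hM hN
  rw [pow_succ] at hM ⊢
  linarith

/-- `M` and `N` are equivalent, their height-balance on every partial input
`s[u←x]` (with `s` in the common domain and `u` a node of `s`) is bounded by `1`,
but no constant bounds their size-balance. -/
theorem example_unbounded_size_balance :
    MTT.tau Mex = MTT.tau Nex ∧
    (∀ s u pt, (∃ t, (s, t) ∈ MTT.tau Mex) →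
      RTree.ReplaceAt (RTree.map some s) u xLeaf pt →
      ∀ ξ1 ξ2, MEval Mex Mex.init pt ξ1 → MEval Nex Nex.init pt ξ2 →
        |(ξ1.height : ℤ) - (ξ2.height : ℤ)| ≤ 1) ∧
    ¬ ∃ c : ℕ, ∀ s u pt, (∃ t, (s, t) ∈ MTT.tau Mex) →
      RTree.ReplaceAt (RTree.map some s) u xLeaf pt →
      ∀ ξ1 ξ2, MEval Mex Mex.init pt ξ1 → MEval Nex Nex.init pt ξ2 →
        |(ξ1.size : ℤ) - (ξ2.size : ℤ)| ≤ c := by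
  refine ⟨tau_Mex_eq_tau_Nex, ?_, ?_⟩
  · rintro s u pt hs hpt ξ1 ξ2 h1 h2
    obtain ⟨k, rfl⟩ := eq_chain_of_replaceAt hs hpt
    obtain rfl := h1.functional (Mex_eval_partial k)
    cases k with
    | zero =>
      obtain rfl := h2.functional Nex_eval_partial_zero
      simp [perfect, height, heightList]
    | succ k =>
      obtain rfl := h2.functional (Nex_eval_partial_succ k)
      simp [height_perfect, height, heightList]
  · rintro ⟨c, hc⟩
    have h := hc (chain true (.node false []) (c + 1)) (List.replicate (c + 1) 0) _
      ⟨_, wf_rkSig_iff.2 ⟨_, rfl⟩, Mex_eval_input (c + 1)⟩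
      (by rw [map_chain]; exact replaceAt_chain _ _ _ _) _ _
      (Mex_eval_partial (c + 1)) (Nex_eval_partial_succ c)
    rw [size_Mex_partial_sub_size_Nex_partial, abs_of_pos (by positivity)] at h
    have h' : 2 ^ (c + 1) ≤ c := by exact_mod_cast h
    have := @Nat.lt_two_pow_self (c + 1)
    omega
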